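/- Suppose additionally that σ > 0 and that d(θ, x) ≥ (A'(θ) - A'(x))²/(2σ²) for all θ, x ∈ [θ̲, θ̄] (this holds whenever each observation distribution in the exponential family with parameter in [θ̲, θ̄] is σ-sub-Gaussian). Define the gaps Δ_i := A'(θ*_{I*}) - A'(θ*_i) for i ≠ I*, which are strictly positive. Then Γ*_{1/2} ≥ 1 / (16·σ²·Σ_{i ≠ I*} Δ_i^{-2}). -/

import Mathlib

/-!
Put weight `1/2` on `I*` and weights `ψ_i ∝ Δ_i⁻²` (summing to `1/2`) on the other arms.
Since `x ↦ d(θ, x)` decreases left of `θ` and increases right of it, the infimum defining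
`C_i(1/2, ψ_i)` may be taken over `x ∈ [θ*_i, θ*_{I*}]`, where the sub-Gaussian bound applies.
With `a = A'(θ*_{I*}) - A'(x)` and `b = A'(θ*_i) - A'(x)` it gives
`½ d(θ*_{I*}, x) + ψ_i d(θ*_i, x) ≥ (a² + 2ψ_i b²)/(4σ²) ≥ ψ_i (a - b)²/(4σ²) = ψ_i Δ_i²/(4σ²)`,
which by the choice of weights equals `1/(8σ² Σ_{j ≠ I*} Δ_j⁻²)` for every `i`.
-/

/-- Kullback–Leibler divergence in a one-dimensional exponential family with
log-partition function `A`: `d(θ, x) = (θ - x)·A'(θ) - A(θ) + A(x)`. -/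
noncomputable def dKL (A : ℝ → ℝ) (θ x : ℝ) : ℝ := (θ - x) * deriv A θ - A θ + A x

/-- `C(β, ψ) = inf_{x ∈ ℝ} β·d(θ₁, x) + ψ·d(θ₂, x)`. -/
noncomputable def Cfun (A : ℝ → ℝ) (θ₁ θ₂ β ψ : ℝ) : ℝ :=
  ⨅ x : ℝ, (β * dKL A θ₁ x + ψ * dKL A θ₂ x)

/-- `Γ*_β`: the supremum, over nonnegative vectors `ψ` with `ψ_{I*} = β` and
`Σ ψ_i = 1`, of `min_{i ≠ I*} C_i(β, ψ_i)`. -/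
noncomputable def Gamma (A : ℝ → ℝ) (k : ℕ) (θs : Fin k → ℝ) (Istar : Fin k) (β : ℝ) : ℝ :=
  sSup ((fun ψ : Fin k → ℝ =>
      ⨅ i : {i : Fin k // i ≠ Istar}, Cfun A (θs Istar) (θs i.1) β (ψ i.1)) ''
    {ψ : Fin k → ℝ | (∀ i, 0 ≤ ψ i) ∧ ψ Istar = β ∧ (∑ i, ψ i) = 1})

open Set Finset

theorem ConvexOn.add_deriv_mul_sub_le {S : Set ℝ} {f : ℝ → ℝ} (hf : ConvexOn ℝ S f) {x y : ℝ}
    (hy : y ∈ S) (hx : x ∈ S) (hfd : DifferentiableAt ℝ f y) :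
    f y + deriv f y * (x - y) ≤ f x := by
  rcases lt_trichotomy y x with h | rfl | h
  · have := hf.deriv_le_slope hy hx h hfd
    rw [slope_def_field, le_div_iff₀ (sub_pos.2 h)] at this
    linarith
  · simp
  · have := hf.slope_le_deriv hx hy h hfd
    rw [slope_def_field, div_le_iff₀ (sub_pos.2 h)] at this
    linarith

section dKL

variable {A : ℝ → ℝ}

theorem dKL_self (A : ℝ → ℝ) (θ : ℝ) : dKL A θ θ = 0 := by
  simp [dKL]

theorem dKL_nonneg (hA : Differentiable ℝ A) (hconv : ConvexOn ℝ univ A) (θ x : ℝ) :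
    0 ≤ dKL A θ x := by
  have := hconv.add_deriv_mul_sub_le (mem_univ θ) (mem_univ x) (hA θ)
  unfold dKL
  linarith

theorem dKL_monotoneOn (hA : Differentiable ℝ A) (hconv : ConvexOn ℝ univ A) (θ : ℝ) :
    MonotoneOn (dKL A θ) (Ici θ) := by
  intro y (hy : θ ≤ y) x _ hyx
  have htangent := hconv.add_deriv_mul_sub_le (mem_univ y) (mem_univ x) (hA y)
  have hderiv := hconv.monotoneOn_deriv (fun z _ => hA z) (mem_univ θ) (mem_univ y) hy
  have := mul_nonneg (sub_nonneg.2 hderiv) (sub_nonneg.2 hyx)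
  unfold dKL
  linarith

theorem dKL_antitoneOn (hA : Differentiable ℝ A) (hconv : ConvexOn ℝ univ A) (θ : ℝ) :
    AntitoneOn (dKL A θ) (Iic θ) := by
  intro x _ y (hy : y ≤ θ) hxy
  have htangent := hconv.add_deriv_mul_sub_le (mem_univ y) (mem_univ x) (hA y)
  have hderiv := hconv.monotoneOn_deriv (fun z _ => hA z) (mem_univ y) (mem_univ θ) hy
  have := mul_nonneg (sub_nonneg.2 hderiv) (sub_nonneg.2 hxy)
  unfold dKL
  linarith

theorem exists_mem_Icc_forall_dKL_le (hA : Differentiable ℝ A) (hconv : ConvexOn ℝ univ A)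
    {a b : ℝ} (hab : a ≤ b) (x : ℝ) :
    ∃ c ∈ Icc a b, ∀ θ ∈ Icc a b, dKL A θ c ≤ dKL A θ x := by
  rcases le_or_gt x a with hxa | hax
  · exact ⟨a, ⟨le_rfl, hab⟩, fun θ hθ =>
      dKL_antitoneOn hA hconv θ (hxa.trans hθ.1) hθ.1 hxa⟩
  rcases le_or_gt b x with hbx | hxb
  · exact ⟨b, ⟨hab, le_rfl⟩, fun θ hθ =>
      dKL_monotoneOn hA hconv θ hθ.2 (hθ.2.trans hbx) hbx⟩
  · exact ⟨x, ⟨hax.le, hxb.le⟩, fun θ _ => le_rfl⟩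

end dKL

section Cfun

variable {A : ℝ → ℝ} {θ₁ θ₂ β ψ : ℝ}

theorem bddBelow_range_Cfun (hA : Differentiable ℝ A) (hconv : ConvexOn ℝ univ A)
    (hβ : 0 ≤ β) (hψ : 0 ≤ ψ) :
    BddBelow (range fun x => β * dKL A θ₁ x + ψ * dKL A θ₂ x) := by
  refine ⟨0, ?_⟩
  rintro _ ⟨x, rfl⟩
  exact add_nonneg (mul_nonneg hβ (dKL_nonneg hA hconv _ _))
    (mul_nonneg hψ (dKL_nonneg hA hconv _ _))

theorem Cfun_nonneg (hA : Differentiable ℝ A) (hconv : ConvexOn ℝ univ A)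
    (hβ : 0 ≤ β) (hψ : 0 ≤ ψ) : 0 ≤ Cfun A θ₁ θ₂ β ψ :=
  le_ciInf fun _ => add_nonneg (mul_nonneg hβ (dKL_nonneg hA hconv _ _))
    (mul_nonneg hψ (dKL_nonneg hA hconv _ _))

theorem Cfun_le_mul_dKL (hA : Differentiable ℝ A) (hconv : ConvexOn ℝ univ A)
    (hβ : 0 ≤ β) (hψ : 0 ≤ ψ) : Cfun A θ₁ θ₂ β ψ ≤ β * dKL A θ₁ θ₂ := by
  calc Cfun A θ₁ θ₂ β ψ ≤ β * dKL A θ₁ θ₂ + ψ * dKL A θ₂ θ₂ :=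
        ciInf_le (bddBelow_range_Cfun hA hconv hβ hψ) θ₂
    _ = β * dKL A θ₁ θ₂ := by rw [dKL_self, mul_zero, add_zero]

theorem mul_sq_sub_deriv_div_le_Cfun_half (hA : Differentiable ℝ A)
    (hconv : ConvexOn ℝ univ A) {σ : ℝ} (hθ : θ₂ ≤ θ₁) (hψ₀ : 0 ≤ ψ) (hψ : ψ ≤ 1 / 2)
    (hsub : ∀ θ ∈ Icc θ₂ θ₁, ∀ x ∈ Icc θ₂ θ₁,
      (deriv A θ - deriv A x) ^ 2 / (2 * σ ^ 2) ≤ dKL A θ x) :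
    ψ * (deriv A θ₁ - deriv A θ₂) ^ 2 / (4 * σ ^ 2) ≤ Cfun A θ₁ θ₂ (1 / 2) ψ := by
  refine le_ciInf fun x => ?_
  obtain ⟨c, hc, hcx⟩ := exists_mem_Icc_forall_dKL_le hA hconv hθ x
  have h₁ := hsub θ₁ ⟨hθ, le_rfl⟩ c hc
  have h₂ := hsub θ₂ ⟨le_rfl, hθ⟩ c hc
  set a := deriv A θ₁ - deriv A c
  set b := deriv A θ₂ - deriv A c
  -- `a² + 2ψb² - ψ(a - b)² = (1 - 2ψ)a² + ψ(a + b)²`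
  have key : ψ * (a - b) ^ 2 ≤ a ^ 2 + 2 * (ψ * b ^ 2) := by
    nlinarith [mul_nonneg hψ₀ (sq_nonneg (a + b)),
      mul_nonneg (by linarith : (0 : ℝ) ≤ 1 - 2 * ψ) (sq_nonneg a)]
  calc ψ * (deriv A θ₁ - deriv A θ₂) ^ 2 / (4 * σ ^ 2) = ψ * (a - b) ^ 2 / (4 * σ ^ 2) := by
        ring
    _ ≤ (a ^ 2 + 2 * (ψ * b ^ 2)) / (4 * σ ^ 2) := by gcongr
    _ = 1 / 2 * (a ^ 2 / (2 * σ ^ 2)) + ψ * (b ^ 2 / (2 * σ ^ 2)) := by ring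
    _ ≤ 1 / 2 * dKL A θ₁ c + ψ * dKL A θ₂ c := by gcongr
    _ ≤ 1 / 2 * dKL A θ₁ x + ψ * dKL A θ₂ x := by
        gcongr
        · exact hcx θ₁ ⟨hθ, le_rfl⟩
        · exact hcx θ₂ ⟨le_rfl, hθ⟩

end Cfun

theorem le_Gamma {A : ℝ → ℝ} (hA : Differentiable ℝ A) (hconv : ConvexOn ℝ univ A)
    {k : ℕ} {θs : Fin k → ℝ} {Istar : Fin k} {β c : ℝ} (hβ : 0 ≤ β) {ψ : Fin k → ℝ}
    (hψ₀ : ∀ i, 0 ≤ ψ i) (hψI : ψ Istar = β) (hψ₁ : ∑ i, ψ i = 1) {j : Fin k} (hj : j ≠ Istar)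
    (hc : ∀ i, i ≠ Istar → c ≤ Cfun A (θs Istar) (θs i) β (ψ i)) :
    c ≤ Gamma A k θs Istar β := by
  have : Nonempty {i : Fin k // i ≠ Istar} := ⟨⟨j, hj⟩⟩
  unfold Gamma
  refine le_csSup_of_le ?_ (mem_image_of_mem _ ⟨hψ₀, hψI, hψ₁⟩) (le_ciInf fun i => hc i.1 i.2)
  refine ⟨β * dKL A (θs Istar) (θs j), ?_⟩
  rintro _ ⟨φ, ⟨hφ₀, -, -⟩, rfl⟩
  have hbdd : BddBelow (range fun i : {i : Fin k // i ≠ Istar} =>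
      Cfun A (θs Istar) (θs i.1) β (φ i.1)) := by
    refine ⟨0, ?_⟩
    rintro _ ⟨i, rfl⟩
    exact Cfun_nonneg hA hconv hβ (hφ₀ i.1)
  exact (ciInf_le hbdd ⟨j, hj⟩).trans (Cfun_le_mul_dKL hA hconv hβ (hφ₀ j))

section gapWeights

variable {ι : Type*} [Fintype ι] [DecidableEq ι] (Istar : ι) (Δ : ι → ℝ)

noncomputable def gapWeights : ι → ℝ := fun i =>
  if i = Istar then 1 / 2
  else (Δ i ^ 2)⁻¹ / (2 * ∑ j ∈ univ.filter (· ≠ Istar), (Δ j ^ 2)⁻¹)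

theorem gapWeights_self : gapWeights Istar Δ Istar = 1 / 2 := by
  simp [gapWeights]

theorem gapWeights_of_ne {i : ι} (hi : i ≠ Istar) :
    gapWeights Istar Δ i = (Δ i ^ 2)⁻¹ / (2 * ∑ j ∈ univ.filter (· ≠ Istar), (Δ j ^ 2)⁻¹) :=
  if_neg hi

theorem gapWeights_nonneg (i : ι) : 0 ≤ gapWeights Istar Δ i := by
  unfold gapWeights
  split_ifs <;> positivity

theorem gapWeights_le_half (i : ι) : gapWeights Istar Δ i ≤ 1 / 2 := by
  by_cases hi : i = Istar
  · rw [hi, gapWeights_self]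
  rw [gapWeights_of_ne Istar Δ hi]
  refine div_le_of_le_mul₀ (by positivity) (by norm_num) ?_
  calc (Δ i ^ 2)⁻¹ ≤ ∑ j ∈ univ.filter (· ≠ Istar), (Δ j ^ 2)⁻¹ :=
        single_le_sum (f := fun j => (Δ j ^ 2)⁻¹) (fun j _ => by positivity) (by simpa using hi)
    _ = 1 / 2 * (2 * ∑ j ∈ univ.filter (· ≠ Istar), (Δ j ^ 2)⁻¹) := by ring

theorem sum_gapWeights (hS : ∑ j ∈ univ.filter (· ≠ Istar), (Δ j ^ 2)⁻¹ ≠ 0) :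
    ∑ i, gapWeights Istar Δ i = 1 := by
  rw [← add_sum_erase _ _ (mem_univ Istar), gapWeights_self, ← filter_ne',
    sum_congr rfl fun i hi => gapWeights_of_ne Istar Δ (mem_filter.1 hi).2, ← sum_div,
    mul_comm (2 : ℝ), ← div_div, div_self hS]
  norm_num

theorem gapWeights_mul_sq {i : ι} (hi : i ≠ Istar) (hΔ : Δ i ≠ 0) :
    gapWeights Istar Δ i * Δ i ^ 2 = (2 * ∑ j ∈ univ.filter (· ≠ Istar), (Δ j ^ 2)⁻¹)⁻¹ := by
  rw [gapWeights_of_ne Istar Δ hi]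
  field_simp

end gapWeights

theorem stmt_8_general (A : ℝ → ℝ) (hA : Differentiable ℝ A)
    (hconv : StrictConvexOn ℝ (Set.univ : Set ℝ) A)
    (lo hi : ℝ) (k : ℕ) (hk : 2 ≤ k)
    (θs : Fin k → ℝ) (hθs : ∀ j, θs j ∈ Set.Ioo lo hi)
    (Istar : Fin k) (hIstar : ∀ j, j ≠ Istar → θs j < θs Istar)
    (σ : ℝ)
    (hsub : ∀ θ ∈ Set.Icc lo hi, ∀ x ∈ Set.Icc lo hi,
      (deriv A θ - deriv A x) ^ 2 / (2 * σ ^ 2) ≤ dKL A θ x) :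
    (∀ i, i ≠ Istar → 0 < deriv A (θs Istar) - deriv A (θs i)) ∧
    1 / (16 * σ ^ 2 * ∑ i ∈ Finset.univ.filter (· ≠ Istar),
        ((deriv A (θs Istar) - deriv A (θs i)) ^ 2)⁻¹) ≤
      Gamma A k θs Istar (1/2) := by
  set Δ : Fin k → ℝ := fun i => deriv A (θs Istar) - deriv A (θs i)
  set S := ∑ i ∈ univ.filter (· ≠ Istar), (Δ i ^ 2)⁻¹
  have hgap : ∀ i, i ≠ Istar → 0 < Δ i := fun i hiI =>
    sub_pos.2 <| hconv.strictMonoOn_deriv (fun x _ => hA x) trivial trivial (hIstar i hiI)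
  refine ⟨hgap, ?_⟩
  obtain ⟨j, hj⟩ := Fintype.exists_ne_of_one_lt_card (by rw [Fintype.card_fin]; exact hk) Istar
  have hS : 0 < S :=
    sum_pos (fun i hiI => by have := hgap i (mem_filter.1 hiI).2; positivity) ⟨j, by simpa using hj⟩
  refine le_Gamma hA hconv.convexOn (by norm_num) (gapWeights_nonneg Istar Δ)
    (gapWeights_self Istar Δ) (sum_gapWeights Istar Δ hS.ne') hj fun i hiI => ?_
  have hIcc : Icc (θs i) (θs Istar) ⊆ Icc lo hi := Icc_subset_Icc (hθs i).1.le (hθs Istar).2.le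
  refine le_trans ?_ <| mul_sq_sub_deriv_div_le_Cfun_half hA hconv.convexOn (hIstar i hiI).le
    (gapWeights_nonneg Istar Δ i) (gapWeights_le_half Istar Δ i)
    fun θ hθ x hx => hsub θ (hIcc hθ) x (hIcc hx)
  change _ ≤ gapWeights Istar Δ i * Δ i ^ 2 / (4 * σ ^ 2)
  rw [gapWeights_mul_sq Istar Δ hiI (hgap i hiI).ne']
  have : 0 ≤ 1 / (16 * σ ^ 2 * S) := by positivity
  calc 1 / (16 * σ ^ 2 * S) ≤ 2 * (1 / (16 * σ ^ 2 * S)) := by linarith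
    _ = (2 * S)⁻¹ / (4 * σ ^ 2) := by ring

/-- Sub-Gaussian lower bound on the optimal exponent:
if `d(θ, x) ≥ (A'(θ) - A'(x))²/(2σ²)` on `[θ̲, θ̄]`, then the gaps
`Δ_i = A'(θ*_{I*}) - A'(θ*_i)` are positive and
`Γ*_{1/2} ≥ 1/(16σ² Σ_{i ≠ I*} Δ_i⁻²)`. -/
theorem stmt_8 (A : ℝ → ℝ) (hA : Differentiable ℝ A)
    (hconv : StrictConvexOn ℝ (Set.univ : Set ℝ) A)
    (lo hi : ℝ) (hlh : lo < hi) (k : ℕ) (hk : 2 ≤ k)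
    (θs : Fin k → ℝ) (hθs : ∀ j, θs j ∈ Set.Ioo lo hi)
    (Istar : Fin k) (hIstar : ∀ j, j ≠ Istar → θs j < θs Istar)
    (σ : ℝ) (hσ : 0 < σ)
    (hsub : ∀ θ ∈ Set.Icc lo hi, ∀ x ∈ Set.Icc lo hi,
      (deriv A θ - deriv A x) ^ 2 / (2 * σ ^ 2) ≤ dKL A θ x) :
    (∀ i, i ≠ Istar → 0 < deriv A (θs Istar) - deriv A (θs i)) ∧
    1 / (16 * σ ^ 2 * ∑ i ∈ Finset.univ.filter (· ≠ Istar),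
        ((deriv A (θs Istar) - deriv A (θs i)) ^ 2)⁻¹) ≤
      Gamma A k θs Istar (1/2) :=
  stmt_8_general A hA hconv lo hi k hk θs hθs Istar hIstar σ hsub
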